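/- Let A, B be n×n Hermitian matrices, H = A + B, Q₃ = A³ + 3A²B + 3AB² + B³. Then the eigenvalue vector of H³ is majorized by the eigenvalue vector of Re Q₃ = (Q₃ + Q₃*)/2: the partial sums of the r largest eigenvalues of H³ are at most those of Re Q₃ for every r, with equality of total sums. -/

import Mathlib

/-!
With `H = A + B`, one has `Re Q₃ = H³ + ⁅A, ⁅A, H⁆⁆ - ½ ⁅H, ⁅A, H⁆⁆`. The commutators are
traceless, which gives the equality of the total sums. In an orthonormal eigenbasis of `H`
(eigenvalues `d`, and `X` the matrix of `A`) the diagonal of `⁅H, ⁅A, H⁆⁆` vanishes and the `k`-th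
diagonal entry of `Re Q₃` is `d k ^ 3 + ∑ j, 2 |X k j|² (d k - d j)`. Summed over the indices of
the `r` largest `d k` the correction is nonnegative: the pairs inside that set cancel, the others
have `d j ≤ d k`. As `x ↦ x³` is monotone, these indices carry the `r` largest eigenvalues of `H³`,
and Schur's inequality (`r` diagonal entries of a Hermitian matrix sum to at most its `r` largest
eigenvalues) concludes.
-/

open Matrix BigOperators
open scoped ComplexOrder

/-- `descSort f` lists the values of `f` in nonincreasing order:
`descSort f j` is the `j`-th largest value of `f`. -/
noncomputable def descSort {n : ℕ} (f : Fin n → ℝ) : Fin n → ℝ :=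
  f ∘ Tuple.sort (fun i => -(f i))

/-- The singular values of a complex square matrix, in nonincreasing order. -/
noncomputable def singVals {n : ℕ} (Y : Matrix (Fin n) (Fin n) ℂ) : Fin n → ℝ :=
  descSort (fun i => Real.sqrt ((Matrix.posSemidef_conjTranspose_mul_self Y).1.eigenvalues i))

/-- The orthogonal (spectral) projection onto the span of the eigenvectors of `F`
indexed by the set `s`, in an orthonormal eigenbasis of the Hermitian matrix `F`. -/
noncomputable def specProj {n : ℕ} {F : Matrix (Fin n) (Fin n) ℂ} (hF : F.IsHermitian)
    (s : Finset (Fin n)) : Matrix (Fin n) (Fin n) ℂ :=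
  (hF.eigenvectorUnitary : Matrix (Fin n) (Fin n) ℂ) *
    Matrix.diagonal (fun i => if i ∈ s then (1:ℂ) else 0) *
    (hF.eigenvectorUnitary : Matrix (Fin n) (Fin n) ℂ)ᴴ

open Finset Complex Unitary

section DescSort

variable {n : ℕ}

theorem antitone_descSort (f : Fin n → ℝ) : Antitone (descSort f) := fun _ _ hij => by
  simpa [descSort] using Tuple.monotone_sort (fun i => -(f i)) hij

theorem map_univ_descSort (f : Fin n → ℝ) : univ.val.map (descSort f) = univ.val.map f := by
  rw [descSort, ← Multiset.map_map, Multiset.map_univ_val_equiv]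

theorem eq_of_antitone_of_map_univ_eq {f g : Fin n → ℝ} (hf : Antitone f) (hg : Antitone g)
    (h : univ.val.map f = univ.val.map g) : f = g := by
  rw [Fin.univ_val_map, Fin.univ_val_map, Multiset.coe_eq_coe] at h
  exact List.ofFn_injective (h.eq_of_sortedGE hf.sortedGE_ofFn hg.sortedGE_ofFn)

theorem descSort_eq_of_map_univ_eq {f g : Fin n → ℝ} (h : univ.val.map f = univ.val.map g) :
    descSort f = descSort g :=
  eq_of_antitone_of_map_univ_eq (antitone_descSort f) (antitone_descSort g) <| by
    rw [map_univ_descSort, map_univ_descSort, h]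

theorem descSort_comp_of_monotone {φ : ℝ → ℝ} (hφ : Monotone φ) (f : Fin n → ℝ) :
    descSort (φ ∘ f) = φ ∘ descSort f :=
  eq_of_antitone_of_map_univ_eq (antitone_descSort _)
    (hφ.comp_antitone (antitone_descSort f)) <| by
    rw [map_univ_descSort, ← Multiset.map_map, ← Multiset.map_map, map_univ_descSort]

theorem sum_descSort (f : Fin n → ℝ) : ∑ j, descSort f j = ∑ j, f j := by
  simp only [sum_eq_multiset_sum, map_univ_descSort]

theorem sum_mul_le_sum_filter_lt_descSort {r : ℕ} (f s : Fin n → ℝ) (hs0 : ∀ i, 0 ≤ s i)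
    (hs1 : ∀ i, s i ≤ 1) (hs : ∑ i, s i = r) :
    ∑ i, f i * s i ≤ ∑ j ∈ univ.filter (fun j : Fin n => (j : ℕ) < r), descSort f j := by
  set σ := Tuple.sort fun i => -(f i)
  set e := descSort f
  set t := s ∘ σ
  have hrn : r ≤ n := by
    have : ∑ i, s i ≤ ∑ _i : Fin n, (1 : ℝ) := sum_le_sum fun i _ => hs1 i
    simp only [hs, sum_const, card_univ, Fintype.card_fin, nsmul_eq_mul, mul_one] at this
    exact_mod_cast this
  obtain ⟨m, hm_lt, hm_ge⟩ :
      ∃ m, (∀ j : Fin n, (j : ℕ) < r → m ≤ e j) ∧ ∀ j : Fin n, r ≤ j → e j ≤ m := by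
    by_cases hr : r < n
    · exact ⟨e ⟨r, hr⟩, fun j hj => antitone_descSort f (Fin.le_def.2 hj.le),
        fun j hj => antitone_descSort f (Fin.le_def.2 hj)⟩
    · obtain ⟨m, hm⟩ := (Set.finite_range e).bddBelow
      exact ⟨m, fun j _ => hm ⟨j, rfl⟩, fun j hj => absurd j.2 (by omega)⟩
  let ind : Fin n → ℝ := fun j => if (j : ℕ) < r then 1 else 0
  have hind : ∑ j, ind j = r := by
    rw [← sum_filter, sum_const, Fin.card_filter_val_lt, min_eq_right hrn, nsmul_one]
  have ht : ∑ j, t j = r := (Equiv.sum_comp σ s).trans hs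
  have hterm : ∀ j, 0 ≤ (e j - m) * (ind j - t j) := by
    intro j
    by_cases hj : (j : ℕ) < r
    · simp only [ind, if_pos hj]
      exact mul_nonneg (sub_nonneg.2 (hm_lt j hj)) (sub_nonneg.2 (hs1 _))
    · simp only [ind, if_neg hj]
      exact mul_nonneg_of_nonpos_of_nonpos (sub_nonpos.2 (hm_ge j (not_lt.1 hj)))
        (sub_nonpos.2 (hs0 (σ j)))
  have hexpand : ∑ j, (e j - m) * (ind j - t j) =
      ∑ j, e j * ind j - ∑ j, e j * t j - m * (∑ j, ind j - ∑ j, t j) := by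
    simp only [sub_mul, mul_sub, sum_sub_distrib, mul_sum]
    ring
  rw [hind, ht, sub_self, mul_zero, sub_zero] at hexpand
  have hfilter : ∑ j ∈ univ.filter (fun j : Fin n => (j : ℕ) < r), e j = ∑ j, e j * ind j := by
    simp [ind, sum_filter]
  calc ∑ i, f i * s i = ∑ j, e j * t j := (Equiv.sum_comp σ fun i => f i * s i).symm
    _ ≤ _ := by linarith [sum_nonneg fun j (_ : j ∈ univ) => hterm j]

noncomputable def topIndices (f : Fin n → ℝ) (r : ℕ) : Finset (Fin n) :=
  (univ.filter fun j : Fin n => (j : ℕ) < r).map (Tuple.sort fun i => -(f i)).toEmbedding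

theorem card_topIndices (f : Fin n → ℝ) {r : ℕ} (hr : r ≤ n) : #(topIndices f r) = r := by
  rw [topIndices, card_map, Fin.card_filter_val_lt, min_eq_right hr]

theorem le_of_mem_topIndices {f : Fin n → ℝ} {r : ℕ} {k j : Fin n} (hk : k ∈ topIndices f r)
    (hj : j ∉ topIndices f r) : f j ≤ f k := by
  set σ := Tuple.sort fun i => -(f i)
  obtain ⟨a, ha, rfl⟩ := mem_map.1 hk
  have hb : ¬ ((σ.symm j : Fin n) : ℕ) < r := fun hb =>
    hj (mem_map.2 ⟨σ.symm j, by simpa using hb, by simp [σ]⟩)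
  have := antitone_descSort f (Fin.le_def.2 (by simp at ha; omega) : a ≤ σ.symm j)
  simpa [descSort, σ] using this

theorem sum_filter_lt_descSort_comp {φ : ℝ → ℝ} (hφ : Monotone φ) (f : Fin n → ℝ) (r : ℕ) :
    ∑ j ∈ univ.filter (fun j : Fin n => (j : ℕ) < r), descSort (φ ∘ f) j =
      ∑ k ∈ topIndices f r, φ (f k) := by
  rw [descSort_comp_of_monotone hφ, topIndices, sum_map]
  rfl

end DescSort

theorem sum_sum_mul_sub_nonneg {ι : Type*} [Fintype ι] {w : ι → ι → ℝ}
    (hw : ∀ i j, w i j = w j i) (hw0 : ∀ i j, 0 ≤ w i j) {d : ι → ℝ} {S : Finset ι}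
    (hS : ∀ k ∈ S, ∀ j ∉ S, d j ≤ d k) :
    0 ≤ ∑ k ∈ S, ∑ j, w k j * (d k - d j) := by
  classical
  have hinner : ∑ k ∈ S, ∑ j ∈ S, w k j * (d k - d j) = 0 := by
    have hswap : ∑ j ∈ S, ∑ k ∈ S, w k j * (d k - d j) =
        -∑ k ∈ S, ∑ j ∈ S, w k j * (d k - d j) := by
      simp only [← sum_neg_distrib]
      refine sum_congr rfl fun j _ => sum_congr rfl fun k _ => ?_
      rw [hw]
      ring
    linarith [sum_comm (s := S) (t := S) (f := fun k j => w k j * (d k - d j))]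
  have houter : 0 ≤ ∑ k ∈ S, ∑ j ∈ Sᶜ, w k j * (d k - d j) :=
    sum_nonneg fun k hk => sum_nonneg fun j hj =>
      mul_nonneg (hw0 k j) (sub_nonneg.2 (hS k hk j (mem_compl.1 hj)))
  simp_rw [← sum_add_sum_compl S fun j => w _ j * (_ - d j), sum_add_distrib, hinner, zero_add]
  exact houter

theorem map_lie_of_ringHomClass {F R S : Type*} [Ring R] [Ring S] [FunLike F R S]
    [RingHomClass F R S] (f : F) (x y : R) : f ⁅x, y⁆ = ⁅f x, f y⁆ := by
  simp only [Ring.lie_def, map_sub, map_mul]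

section Matrix

variable {ι : Type*} [Fintype ι] [DecidableEq ι]

theorem sum_normSq_row_of_mem_unitaryGroup {U : Matrix ι ι ℂ} (hU : U ∈ unitaryGroup ι ℂ)
    (i : ι) : ∑ j, normSq (U i j) = 1 := by
  have h := congrFun (congrFun (mem_unitaryGroup_iff.mp hU) i) i
  rw [mul_apply, one_apply_eq] at h
  exact_mod_cast (by simpa [mul_conj] using h : ∑ j, (normSq (U i j) : ℂ) = 1)

theorem sum_normSq_col_of_mem_unitaryGroup {U : Matrix ι ι ℂ} (hU : U ∈ unitaryGroup ι ℂ)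
    (j : ι) : ∑ i, normSq (U i j) = 1 := by
  simpa using sum_normSq_row_of_mem_unitaryGroup (Unitary.star_mem hU) j

theorem mul_diagonal_mul_star_apply_self (U : Matrix ι ι ℂ) (μ : ι → ℝ) (k : ι) :
    (U * diagonal (RCLike.ofReal ∘ μ) * star U : Matrix ι ι ℂ) k k =
      ↑(∑ i, μ i * normSq (U k i)) := by
  rw [mul_apply]
  simp only [mul_diagonal, star_apply, Function.comp_apply, RCLike.star_def]
  push_cast
  refine sum_congr rfl fun i _ => ?_
  rw [mul_comm (U k i), mul_assoc, mul_conj]; rfl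

theorem Matrix.IsHermitian.eigenvalues_conjStarAlgAut {M : Matrix ι ι ℂ} (hM : M.IsHermitian)
    (u : unitary (Matrix ι ι ℂ)) (hu : (conjStarAlgAut ℂ _ u M).IsHermitian) :
    hu.eigenvalues = hM.eigenvalues :=
  (hu.eigenvalues_eq_eigenvalues_iff hM).2 <| by
    rw [conjStarAlgAut_apply, charpoly_mul_comm, ← Matrix.mul_assoc, coe_star_mul_self,
      Matrix.one_mul]

theorem Matrix.IsHermitian.map_univ_eigenvalues_pow {M : Matrix ι ι ℂ} (hM : M.IsHermitian)
    (m : ℕ) (hMm : (M ^ m).IsHermitian) :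
    univ.val.map hMm.eigenvalues = univ.val.map fun i => hM.eigenvalues i ^ m := by
  apply Multiset.map_injective ofReal_injective
  have hroots := hMm.roots_charpoly_eq_eigenvalues
  have hchar := hM.charpoly_cfc_eq (· ^ m)
  rw [cfc_pow_id M m hM.isSelfAdjoint] at hchar
  rw [hchar, Polynomial.roots_prod] at hroots
  · simp only [Polynomial.roots_X_sub_C, Multiset.bind_singleton] at hroots
    rw [Multiset.map_map, Multiset.map_map]
    exact hroots.symm
  · exact prod_ne_zero_iff.2 fun i _ => Polynomial.X_sub_C_ne_zero _

theorem lie_diagonal_apply_self {R : Type*} [CommRing R] (v : ι → R) (Y : Matrix ι ι R) (k : ι) :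
    ⁅diagonal v, Y⁆ k k = 0 := by
  simp [Ring.lie_def, diagonal_mul, mul_diagonal, mul_comm]

theorem lie_lie_diagonal_apply_self {X : Matrix ι ι ℂ} (hX : X.IsHermitian) (d : ι → ℝ) (k : ι) :
    ⁅X, ⁅X, diagonal (RCLike.ofReal ∘ d : ι → ℂ)⁆⁆ k k =
      ↑(∑ j, 2 * normSq (X k j) * (d k - d j)) := by
  have hC : ∀ a b, ⁅X, diagonal (RCLike.ofReal ∘ d : ι → ℂ)⁆ a b = X a b * (d b - d a) := by
    intro a b
    simp [Ring.lie_def, mul_diagonal, diagonal_mul]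
    ring
  rw [Ring.lie_def, Matrix.sub_apply, mul_apply, mul_apply, ← sum_sub_distrib]
  push_cast
  refine sum_congr rfl fun j _ => ?_
  rw [hC, hC, ← hX.apply j k, RCLike.star_def, ← mul_conj]
  ring

theorem reQ3_eq_cube_add_lie {A B : Matrix ι ι ℂ} (hA : A.IsHermitian)
    (hB : B.IsHermitian) :
    (1 / 2 : ℂ) • ((A ^ 3 + (3 : ℂ) • (A ^ 2 * B) + (3 : ℂ) • (A * B ^ 2) + B ^ 3)
        + (A ^ 3 + (3 : ℂ) • (A ^ 2 * B) + (3 : ℂ) • (A * B ^ 2) + B ^ 3)ᴴ) =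
      (A + B) ^ 3 + ⁅A, ⁅A, A + B⁆⁆ - (1 / 2 : ℂ) • ⁅A + B, ⁅A, A + B⁆⁆ := by
  simp only [conjTranspose_add, conjTranspose_smul, conjTranspose_mul, conjTranspose_pow, hA.eq,
    hB.eq, star_ofNat, Ring.lie_def]
  apply smul_right_injective (Matrix ι ι ℂ) (two_ne_zero (α := ℂ))
  simp only [smul_add, smul_sub, smul_smul]
  norm_num [ofNat_smul_eq_nsmul (R := ℂ)]
  noncomm_ring

end Matrix

theorem Matrix.IsHermitian.sum_re_apply_self_le {n : ℕ} {M : Matrix (Fin n) (Fin n) ℂ}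
    (hM : M.IsHermitian) (S : Finset (Fin n)) :
    ∑ k ∈ S, (M k k).re ≤
      ∑ j ∈ univ.filter (fun j : Fin n => (j : ℕ) < #S), descSort hM.eigenvalues j := by
  set V := hM.eigenvectorUnitary
  have hdiag : ∀ k, (M k k).re = ∑ i, hM.eigenvalues i * normSq ((V : Matrix _ _ ℂ) k i) := by
    intro k
    conv_lhs => rw [hM.spectral_theorem, conjStarAlgAut_apply, mul_diagonal_mul_star_apply_self]
    exact ofReal_re _
  calc ∑ k ∈ S, (M k k).re
      = ∑ i, hM.eigenvalues i * ∑ k ∈ S, normSq ((V : Matrix _ _ ℂ) k i) := by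
        simp_rw [hdiag, mul_sum]; exact sum_comm
    _ ≤ _ := sum_mul_le_sum_filter_lt_descSort _ _
        (fun i => sum_nonneg fun k _ => normSq_nonneg _)
        (fun i => (sum_le_univ_sum_of_nonneg fun k => normSq_nonneg _).trans_eq
          (sum_normSq_col_of_mem_unitaryGroup V.2 i))
        (by rw [sum_comm]; simp [sum_normSq_row_of_mem_unitaryGroup V.2])

section CubeAddLie

variable {n : ℕ} {A H R : Matrix (Fin n) (Fin n) ℂ}

theorem re_conjStarAlgAut_apply_self_of_eq_cube_add_lie (hA : A.IsHermitian)
    (hR : R = H ^ 3 + ⁅A, ⁅A, H⁆⁆ - (1 / 2 : ℂ) • ⁅H, ⁅A, H⁆⁆)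
    {u : unitary (Matrix (Fin n) (Fin n) ℂ)} {d : Fin n → ℝ}
    (hu : conjStarAlgAut ℂ _ u H = diagonal (RCLike.ofReal ∘ d)) (k : Fin n) :
    (conjStarAlgAut ℂ _ u R k k).re =
      d k ^ 3 + ∑ j, 2 * normSq (conjStarAlgAut ℂ _ u A k j) * (d k - d j) := by
  simp only [hR, map_sub, map_add, map_pow, map_smul, map_lie_of_ringHomClass, hu]
  rw [Matrix.sub_apply, Matrix.add_apply, Matrix.smul_apply, lie_diagonal_apply_self,
    lie_lie_diagonal_apply_self (hA.isSelfAdjoint.map _), diagonal_pow, diagonal_apply_eq]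
  simp [← Complex.ofReal_pow]

theorem sum_filter_lt_descSort_eigenvalues_le_of_eq_cube_add_lie (hA : A.IsHermitian)
    (hH : H.IsHermitian) (hH3 : (H ^ 3).IsHermitian) (hR : R.IsHermitian)
    (hRe : R = H ^ 3 + ⁅A, ⁅A, H⁆⁆ - (1 / 2 : ℂ) • ⁅H, ⁅A, H⁆⁆) {r : ℕ} (hr : r ≤ n) :
    ∑ j ∈ univ.filter (fun j : Fin n => (j : ℕ) < r), descSort hH3.eigenvalues j ≤
      ∑ j ∈ univ.filter (fun j : Fin n => (j : ℕ) < r), descSort hR.eigenvalues j := by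
  set d := hH.eigenvalues
  obtain ⟨u, hu⟩ : ∃ u, conjStarAlgAut ℂ _ u H = diagonal (RCLike.ofReal ∘ d) :=
    ⟨_, hH.conjStarAlgAut_star_eigenvectorUnitary⟩
  have huA : (conjStarAlgAut ℂ _ u A).IsHermitian := hA.isSelfAdjoint.map _
  have huR : (conjStarAlgAut ℂ _ u R).IsHermitian := hR.isSelfAdjoint.map _
  have hcube : descSort hH3.eigenvalues = descSort ((· ^ 3) ∘ d) :=
    descSort_eq_of_map_univ_eq (hH.map_univ_eigenvalues_pow 3 hH3)
  calc ∑ j ∈ univ.filter (fun j : Fin n => (j : ℕ) < r), descSort hH3.eigenvalues j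
      = ∑ k ∈ topIndices d r, d k ^ 3 := by
        rw [hcube, sum_filter_lt_descSort_comp (Odd.strictMono_pow (by decide)).monotone]
    _ ≤ ∑ k ∈ topIndices d r, (conjStarAlgAut ℂ _ u R k k).re := by
        simp_rw [re_conjStarAlgAut_apply_self_of_eq_cube_add_lie hA hRe hu, sum_add_distrib]
        exact le_add_of_nonneg_right <| sum_sum_mul_sub_nonneg
          (fun k j => by rw [← huA.apply j k, RCLike.star_def, normSq_conj])
          (fun k j => mul_nonneg zero_le_two (normSq_nonneg _))
          (fun k hk j hj => le_of_mem_topIndices hk hj)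
    _ ≤ _ := huR.sum_re_apply_self_le _
    _ = _ := by rw [card_topIndices d hr, hR.eigenvalues_conjStarAlgAut _ huR]

theorem sum_descSort_eigenvalues_eq_of_eq_cube_add_lie (hH3 : (H ^ 3).IsHermitian)
    (hR : R.IsHermitian) (hRe : R = H ^ 3 + ⁅A, ⁅A, H⁆⁆ - (1 / 2 : ℂ) • ⁅H, ⁅A, H⁆⁆) :
    ∑ j, descSort hH3.eigenvalues j = ∑ j, descSort hR.eigenvalues j := by
  have htrace : trace R = trace (H ^ 3) := by
    simp [hRe, LieAlgebra.matrix_trace_commutator_zero]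
  rw [sum_descSort, sum_descSort]
  exact_mod_cast (hH3.trace_eq_sum_eigenvalues.symm.trans htrace.symm).trans
    hR.trace_eq_sum_eigenvalues

end CubeAddLie

/-- `λ(H³) ≺ λ(Re Q₃)`: weak majorization of partial sums plus equality of total sums. -/
theorem eig_cube_majorized_by_eig_reQ3 {n : ℕ} (A B : Matrix (Fin n) (Fin n) ℂ)
    (hA : A.IsHermitian) (hB : B.IsHermitian)
    (hH3 : ((A + B) ^ 3).IsHermitian)
    (hR3 : ((1 / 2 : ℂ) •
        ((A ^ 3 + (3 : ℂ) • (A ^ 2 * B) + (3 : ℂ) • (A * B ^ 2) + B ^ 3)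
          + (A ^ 3 + (3 : ℂ) • (A ^ 2 * B) + (3 : ℂ) • (A * B ^ 2) + B ^ 3)ᴴ)).IsHermitian) :
    (∀ r : ℕ, r ≤ n →
        ∑ j ∈ Finset.univ.filter (fun j : Fin n => (j : ℕ) < r), descSort hH3.eigenvalues j ≤
          ∑ j ∈ Finset.univ.filter (fun j : Fin n => (j : ℕ) < r), descSort hR3.eigenvalues j)
    ∧ ∑ j : Fin n, descSort hH3.eigenvalues j = ∑ j : Fin n, descSort hR3.eigenvalues j := by
  have hRe := reQ3_eq_cube_add_lie hA hB
  exact ⟨fun _ hr => sum_filter_lt_descSort_eigenvalues_le_of_eq_cube_add_lie hA (hA.add hB) hH3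
    hR3 hRe hr, sum_descSort_eigenvalues_eq_of_eq_cube_add_lie hH3 hR3 hRe⟩
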